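/- arXiv:1810.09131 — 9 statements merged into one kernel-verified Lean document; each statement's English description precedes it below -/
import Mathlib

section
/- For all real numbers t and x with 0 ≤ t ≤ 1 and x ≥ 1, one has (1 + t)^x ≥ 1 + (2^x − 1)·t^x. -/
/-! Since `u ↦ u ^ x` is convex on `[0, ∞)`, its increment over a step of length `t` grows with
the starting point; comparing the starting points `t ≤ 1` gives `(2t)^x - t^x ≤ (1 + t)^x - 1`,
and `(2t)^x = 2^x t^x`. -/

open Set

theorem ConvexOn.map_add_sub_map_le_map_add_sub_map {𝕜 : Type*} [Field 𝕜] [LinearOrder 𝕜]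
    [IsStrictOrderedRing 𝕜] {s : Set 𝕜} {f : 𝕜 → 𝕜} (hf : ConvexOn 𝕜 s f) {a b c : 𝕜}
    (ha : a ∈ s) (hbc : b + c ∈ s) (hab : a ≤ b) (hc : 0 ≤ c) :
    f (a + c) - f a ≤ f (b + c) - f b := by
  rcases hab.eq_or_lt with rfl | hab
  · exact le_rfl
  -- `a + c` and `b` are the convex combinations of `a` and `b + c` with swapped weights.
  have hd : 0 < b + c - a := by linarith
  have hweights : (b - a) / (b + c - a) + c / (b + c - a) = 1 := by field_simp; ring
  have hac : ((b - a) / (b + c - a)) • a + (c / (b + c - a)) • (b + c) = a + c := by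
    simp only [smul_eq_mul]; field_simp; ring
  have hb : (c / (b + c - a)) • a + ((b - a) / (b + c - a)) • (b + c) = b := by
    simp only [smul_eq_mul]; field_simp; ring
  have hleft := hf.2 ha hbc (div_nonneg (sub_nonneg.2 hab.le) hd.le) (div_nonneg hc hd.le)
    hweights
  have hright := hf.2 ha hbc (div_nonneg hc hd.le) (div_nonneg (sub_nonneg.2 hab.le) hd.le)
    ((add_comm _ _).trans hweights)
  rw [hac] at hleft
  rw [hb] at hright
  simp only [smul_eq_mul] at hleft hright
  linear_combination hleft + hright + (f a + f (b + c)) * hweights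

theorem pow_ineq_ge (t x : ℝ) (ht0 : 0 ≤ t) (ht1 : t ≤ 1) (hx : 1 ≤ x) :
    (1 + t) ^ x ≥ 1 + (2 ^ x - 1) * t ^ x := by
  have h := ConvexOn.map_add_sub_map_le_map_add_sub_map (convexOn_rpow hx) (a := t) (b := 1)
    (c := t) ht0 (by simp only [mem_Ici]; linarith) ht1 ht0
  simp only [← two_mul, Real.mul_rpow zero_le_two ht0, Real.one_rpow] at h
  linarith
end

section
/- For all real numbers t and x with 0 ≤ t ≤ 1 and 0 ≤ x ≤ 1, one has (1 + t)^x ≤ 1 + (2^x − 1)·t^x. -/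
/-! Since `u ↦ u ^ x` is concave on `[0, ∞)`, its increment over an interval of fixed length
decreases as the interval moves to the right. Comparing the intervals `[t, 2t]` and `[1, 1 + t]`
gives `(1 + t) ^ x - 1 ≤ (2t) ^ x - t ^ x = (2 ^ x - 1) t ^ x`. -/

theorem ConcaveOn.map_add_sub_map_le_of_le {𝕜 β : Type*} [Field 𝕜] [LinearOrder 𝕜]
    [IsStrictOrderedRing 𝕜] [AddCommGroup β] [PartialOrder β] [IsOrderedAddMonoid β]
    [Module 𝕜 β] {s : Set 𝕜} {f : 𝕜 → β} (hf : ConcaveOn 𝕜 s f) {a b h : 𝕜}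
    (ha : a ∈ s) (hbh : b + h ∈ s) (hab : a ≤ b) (hh : 0 ≤ h) :
    f (b + h) - f b ≤ f (a + h) - f a := by
  rcases (add_le_add hab hh).eq_or_lt with hd | hd
  · obtain rfl : a = b := by linarith
    obtain rfl : h = 0 := by linarith
    simp
  -- `b` and `a + h` divide `[a, b + h]` in the ratios `h : (b - a)` and `(b - a) : h`
  set θ := h / (b + h - a)
  have hd' : b + h - a ≠ 0 := by linarith
  have hθ : 0 ≤ θ := div_nonneg hh (by linarith)
  have hθ' : 0 ≤ 1 - θ := by rw [sub_nonneg, div_le_one (by linarith)]; linarith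
  have eb : θ • a + (1 - θ) • (b + h) = b := by simp only [smul_eq_mul, θ]; field_simp; ring
  have eah : (1 - θ) • a + θ • (b + h) = a + h := by simp only [smul_eq_mul, θ]; field_simp; ring
  have hb := eb ▸ hf.2 ha hbh hθ hθ' (by ring)
  have hah := eah ▸ hf.2 ha hbh hθ' hθ (by ring)
  rw [sub_le_sub_iff]
  calc f (b + h) + f a
      = (θ • f a + (1 - θ) • f (b + h)) + ((1 - θ) • f a + θ • f (b + h)) := by
        rw [add_add_add_comm, ← add_smul, ← add_smul, add_sub_cancel, sub_add_cancel,
          one_smul, one_smul, add_comm]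
    _ ≤ f b + f (a + h) := add_le_add hb hah
    _ = f (a + h) + f b := add_comm _ _

theorem pow_ineq_le (t x : ℝ) (ht0 : 0 ≤ t) (ht1 : t ≤ 1) (hx0 : 0 ≤ x) (hx1 : x ≤ 1) :
    (1 + t) ^ x ≤ 1 + (2 ^ x - 1) * t ^ x := by
  have key := (Real.concaveOn_rpow hx0 hx1).map_add_sub_map_le_of_le (a := t) (b := 1) (h := t)
    ht0 (by simp only [Set.mem_Ici]; linarith) ht1 ht0
  rw [Real.one_rpow, ← two_mul, Real.mul_rpow zero_le_two ht0] at key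
  linarith
end

section
/- Let a, b, c be nonnegative real numbers with c² ≥ a² + b² and a ≥ b, and let α ≥ 2 be a real number. Then c^α ≥ a^α + (2^{α/2} − 1)·b^α. -/
/-! With `u = a²`, `v = b²` and `t = α/2 ≥ 1`, the claim follows from `c^α ≥ (u + v)^t` and
`(u + v)^t ≥ u^t + (2^t - 1) v^t`. The latter says that the increment of the convex function
`x ↦ x^t` over `[u, u + v]` dominates its increment over `[v, 2v]`, an interval of the same length
lying further to the left. -/

theorem ConvexOn.map_add_add_map_le {𝕜 : Type*} [Field 𝕜] [LinearOrder 𝕜] [IsStrictOrderedRing 𝕜]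
    {s : Set 𝕜} {f : 𝕜 → 𝕜} (hf : ConvexOn 𝕜 s f) {x y d : 𝕜} (hx : x ∈ s) (hyd : y + d ∈ s)
    (hxy : x ≤ y) (hd : 0 ≤ d) : f (x + d) + f y ≤ f x + f (y + d) := by
  rcases hd.eq_or_lt with rfl | hd
  · simp only [add_zero, le_refl]
  set D := y + d - x
  have hD : 0 < D := by linarith
  have hw₁ : 0 ≤ (y - x) / D := div_nonneg (sub_nonneg.2 hxy) hD.le
  have hw₂ : 0 ≤ d / D := div_nonneg hd.le hD.le
  have hsum : (y - x) / D + d / D = 1 := by field_simp; ring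
  -- `x + d` and `y` are the two convex combinations of `x` and `y + d` with swapped weights
  have h₁ : f (x + d) ≤ (y - x) / D * f x + d / D * f (y + d) := by
    have h := hf.2 hx hyd hw₁ hw₂ hsum
    rwa [smul_eq_mul, smul_eq_mul, show (y - x) / D * x + d / D * (y + d) = x + d by
      field_simp; ring] at h
  have h₂ : f y ≤ d / D * f x + (y - x) / D * f (y + d) := by
    have h := hf.2 hx hyd hw₂ hw₁ (by rw [add_comm, hsum])
    rwa [smul_eq_mul, smul_eq_mul, show d / D * x + (y - x) / D * (y + d) = y by
      field_simp; ring] at h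
  calc f (x + d) + f y
      ≤ ((y - x) / D + d / D) * (f x + f (y + d)) := by linarith
    _ = f x + f (y + d) := by rw [hsum, one_mul]

theorem Real.rpow_add_two_rpow_sub_one_mul_rpow_le_add_rpow {u v t : ℝ} (hv : 0 ≤ v) (hvu : v ≤ u)
    (ht : 1 ≤ t) : u ^ t + (2 ^ t - 1) * v ^ t ≤ (u + v) ^ t := by
  have h := (convexOn_rpow ht).map_add_add_map_le (Set.mem_Ici.2 hv)
    (Set.mem_Ici.2 (by linarith : 0 ≤ u + v)) hvu hv
  rw [← two_mul, Real.mul_rpow zero_le_two hv] at h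
  linarith

theorem lemma1_analytic (a b c α : ℝ) (ha : 0 ≤ a) (hb : 0 ≤ b) (hc : 0 ≤ c)
    (hcab : a ^ 2 + b ^ 2 ≤ c ^ 2) (hab : b ≤ a) (hα : 2 ≤ α) :
    c ^ α ≥ a ^ α + (2 ^ (α / 2) - 1) * b ^ α := by
  have hsq {x : ℝ} (hx : 0 ≤ x) : (x ^ 2) ^ (α / 2) = x ^ α := by
    rw [← Real.rpow_two, ← Real.rpow_mul hx, mul_div_cancel₀ α two_ne_zero]
  calc a ^ α + (2 ^ (α / 2) - 1) * b ^ α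
      = (a ^ 2) ^ (α / 2) + (2 ^ (α / 2) - 1) * (b ^ 2) ^ (α / 2) := by rw [hsq ha, hsq hb]
    _ ≤ (a ^ 2 + b ^ 2) ^ (α / 2) :=
      Real.rpow_add_two_rpow_sub_one_mul_rpow_le_add_rpow (sq_nonneg b)
        (pow_le_pow_left₀ hb hab 2) (by linarith)
    _ ≤ (c ^ 2) ^ (α / 2) := Real.rpow_le_rpow (by positivity) hcab (by linarith)
    _ = c ^ α := hsq hc
end

section
/- For all real numbers b, c, μ with 0 ≤ b ≤ c and μ ≥ 1, one has (b + c)^μ ≥ c^μ + (2^μ − 1)·b^μ. -/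
/-!
The map `x ↦ x ^ μ` is convex on `[0, ∞)` for `μ ≥ 1`, so its increments over intervals of a
fixed length `b` grow with the left endpoint. Comparing the increment on `[b, 2b]` with the one
on `[c, c + b]` gives `2 ^ μ b ^ μ - b ^ μ ≤ (b + c) ^ μ - c ^ μ`.
-/

open Set

variable {𝕜 : Type*} [Field 𝕜] [LinearOrder 𝕜] [IsStrictOrderedRing 𝕜] {s : Set 𝕜} {f : 𝕜 → 𝕜}

theorem ConvexOn.map_add_sub_le_map_add_sub (hf : ConvexOn 𝕜 s f) {x y d : 𝕜} (hx : x ∈ s)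
    (hyd : y + d ∈ s) (hxy : x ≤ y) (hd : 0 ≤ d) :
    f (x + d) - f x ≤ f (y + d) - f y := by
  rcases hd.eq_or_lt with rfl | hd
  · simp
  rcases hxy.eq_or_lt with rfl | hxy
  · rfl
  have hxd : x + d ∈ s := hf.1.ordConnected.out hx hyd ⟨by linarith, by linarith⟩
  have hy : y ∈ s := hf.1.ordConnected.out hx hyd ⟨hxy.le, by linarith⟩
  -- Two secant comparisons: first pivoting at `x`, then at `y + d`.
  have h₁ : (f (x + d) - f x) / d ≤ (f (y + d) - f x) / (y + d - x) := by
    simpa using hf.secant_mono hx hxd hyd (by linarith) (by linarith) (by linarith)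
  have h₂ : (f (y + d) - f x) / (y + d - x) ≤ (f (y + d) - f y) / d := by
    convert hf.secant_mono hyd hx hy (by linarith) (by linarith) hxy.le using 1 <;>
      rw [← neg_div_neg_eq] <;> congr 1 <;> ring
  exact (div_le_div_iff_of_pos_right hd).1 (h₁.trans h₂)

theorem weighted_power_ge (b c μ : ℝ) (hb : 0 ≤ b) (hbc : b ≤ c) (hμ : 1 ≤ μ) :
    (b + c) ^ μ ≥ c ^ μ + (2 ^ μ - 1) * b ^ μ := by
  have h := (convexOn_rpow hμ).map_add_sub_le_map_add_sub (mem_Ici.2 hb)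
    (mem_Ici.2 (by linarith : 0 ≤ c + b)) hbc hb
  have h2b : (b + b) ^ μ = 2 ^ μ * b ^ μ := by
    rw [← two_mul, Real.mul_rpow zero_le_two hb]
  rw [h2b, add_comm c b] at h
  linarith
end

section
/- For all real numbers b, c, μ with 0 ≤ b ≤ c and 0 ≤ μ ≤ 1, one has (b + c)^μ ≤ c^μ + (2^μ − 1)·b^μ. -/
theorem ConcaveOn.map_add_sub_map_le_of_le_s4 {𝕜 : Type*} [Field 𝕜] [LinearOrder 𝕜]
    [IsStrictOrderedRing 𝕜] {s : Set 𝕜} {f : 𝕜 → 𝕜} (hf : ConcaveOn 𝕜 s f) {x y h : 𝕜}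
    (hx : x ∈ s) (hyh : y + h ∈ s) (hxy : x ≤ y) (hh : 0 ≤ h) :
    f (y + h) - f y ≤ f (x + h) - f x := by
  rcases (add_nonneg (sub_nonneg.2 hxy) hh).eq_or_lt with hd | hd
  · obtain ⟨rfl, rfl⟩ : y = x ∧ h = 0 := by constructor <;> linarith
    simp
  -- `x + h` and `y` divide `[x, y + h]` in mirrored proportions, so their values dominate
  -- the same convex combination of `f x` and `f (y + h)`.
  have ha : 0 ≤ h / (y - x + h) := by positivity
  have hb : 0 ≤ (y - x) / (y - x + h) := div_nonneg (sub_nonneg.2 hxy) hd.le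
  have hab : h / (y - x + h) + (y - x) / (y - x + h) = 1 := by field_simp; ring
  have hxh := hf.2 hx hyh hb ha (by rw [add_comm, hab])
  have hy := hf.2 hx hyh ha hb hab
  have exh : ((y - x) / (y - x + h)) • x + (h / (y - x + h)) • (y + h) = x + h := by
    simp only [smul_eq_mul]; field_simp; ring
  have ey : (h / (y - x + h)) • x + ((y - x) / (y - x + h)) • (y + h) = y := by
    simp only [smul_eq_mul]; field_simp; ring
  rw [exh] at hxh
  rw [ey] at hy
  simp only [smul_eq_mul] at hxh hy
  linear_combination hxh + hy - (f x + f (y + h)) * hab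

theorem weighted_power_le (b c μ : ℝ) (hb : 0 ≤ b) (hbc : b ≤ c) (hμ0 : 0 ≤ μ) (hμ1 : μ ≤ 1) :
    (b + c) ^ μ ≤ c ^ μ + (2 ^ μ - 1) * b ^ μ := by
  have hinc := (Real.concaveOn_rpow hμ0 hμ1).map_add_sub_map_le_of_le_s4
    (Set.mem_Ici.2 hb) (Set.mem_Ici.2 (by linarith : 0 ≤ c + b)) hbc hb
  have hdouble : (b + b) ^ μ = 2 ^ μ * b ^ μ := by
    rw [← two_mul, Real.mul_rpow zero_le_two hb]
  rw [hdouble, add_comm c] at hinc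
  linarith
end

section
/- Let n ≥ 1 and let x₁, …, xₙ be nonnegative real numbers such that xᵢ ≥ x_{i+1} + x_{i+2} + ⋯ + xₙ for every i with 1 ≤ i ≤ n − 1, and let μ ≥ 1 be a real number. Then (x₁ + x₂ + ⋯ + xₙ)^μ ≥ Σ_{i=1}^{n} (2^μ − 1)^{i−1} · xᵢ^μ. -/
/-!
For `0 ≤ b ≤ c` the pair `(2b, c)` lies between `b` and `b + c` and has the same sum, so convexity
of `t ↦ t ^ μ` gives `(2b) ^ μ + c ^ μ ≤ b ^ μ + (b + c) ^ μ`, i.e.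
`c ^ μ + (2 ^ μ - 1) b ^ μ ≤ (b + c) ^ μ`. Applying this with `c = xᵢ` and `b` the tail sum
`xᵢ₊₁ + ⋯ + xₙ`, from `i = n - 1` down to `i = 1`, builds up the weighted sum one term at a time.
-/

open Finset

theorem ConvexOn.map_add_map_le_of_add_eq {𝕜 : Type*} [Field 𝕜] [LinearOrder 𝕜]
    [IsStrictOrderedRing 𝕜] {s : Set 𝕜} {f : 𝕜 → 𝕜} (hf : ConvexOn 𝕜 s f) {a b x y : 𝕜}
    (ha : a ∈ s) (hb : b ∈ s) (hax : a ≤ x) (hxb : x ≤ b) (hsum : x + y = a + b) :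
    f x + f y ≤ f a + f b := by
  rcases hax.eq_or_lt with rfl | hax'
  · rw [add_left_cancel hsum]
  have hab : 0 < b - a := sub_pos.2 (hax'.trans_le hxb)
  have hθ : 0 ≤ (b - x) / (b - a) := div_nonneg (sub_nonneg.2 hxb) hab.le
  have hθ' : 0 ≤ (x - a) / (b - a) := div_nonneg (sub_nonneg.2 hax) hab.le
  have hθ_sum : (b - x) / (b - a) + (x - a) / (b - a) = 1 := by field
  have hx := hf.2 ha hb hθ hθ' hθ_sum
  have hy := hf.2 ha hb hθ' hθ (by rw [add_comm, hθ_sum])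
  simp only [smul_eq_mul] at hx hy
  have hx_eq : (b - x) / (b - a) * a + (x - a) / (b - a) * b = x := by field
  have hy_eq : (x - a) / (b - a) * a + (b - x) / (b - a) * b = y := by
    rw [eq_sub_of_add_eq' hsum]; field
  rw [hx_eq] at hx
  rw [hy_eq] at hy
  linear_combination hx + hy + (f a + f b) * hθ_sum

theorem Real.rpow_add_mul_rpow_le_add_rpow {μ : ℝ} (hμ : 1 ≤ μ) {b c : ℝ} (hb : 0 ≤ b)
    (hbc : b ≤ c) : c ^ μ + (2 ^ μ - 1) * b ^ μ ≤ (b + c) ^ μ := by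
  have hconv : (2 * b) ^ μ + c ^ μ ≤ b ^ μ + (b + c) ^ μ :=
    (convexOn_rpow hμ).map_add_map_le_of_add_eq hb (Set.mem_Ici.2 (by linarith))
      (by linarith) (by linarith) (by ring)
  rw [Real.mul_rpow zero_le_two hb] at hconv
  linarith

theorem sum_Icc_pow_mul_map_le_map_sum {f : ℝ → ℝ} {w : ℝ} (hw : 0 ≤ w)
    (hf : ∀ b c, 0 ≤ b → b ≤ c → f c + w * f b ≤ f (b + c)) {x : ℕ → ℝ} {k n : ℕ} (hkn : k ≤ n)
    (hx : ∀ i ∈ Icc k n, 0 ≤ x i)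
    (htail : ∀ i ∈ Ico k n, ∑ j ∈ Icc (i + 1) n, x j ≤ x i) :
    ∑ i ∈ Icc k n, w ^ (i - k) * f (x i) ≤ f (∑ i ∈ Icc k n, x i) := by
  induction hkn using Nat.decreasingInduction with
  | self => simp
  | of_succ k hkn ih =>
    have hIcc : Icc k n = insert k (Icc (k + 1) n) :=
      (insert_Icc_add_one_left_eq_Icc hkn.le).symm
    have hweights : ∑ i ∈ Icc (k + 1) n, w ^ (i - k) * f (x i) =
        w * ∑ i ∈ Icc (k + 1) n, w ^ (i - (k + 1)) * f (x i) := by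
      rw [mul_sum]
      refine sum_congr rfl fun i hi => ?_
      rw [← mul_assoc, ← pow_succ', show i - k = i - (k + 1) + 1 by grind]
    have hrest := ih (fun i hi => hx i (Icc_subset_Icc_left k.le_succ hi))
      (fun i hi => htail i (Ico_subset_Ico_left k.le_succ hi))
    have htail_nonneg : 0 ≤ ∑ j ∈ Icc (k + 1) n, x j :=
      sum_nonneg fun i hi => hx i (Icc_subset_Icc_left k.le_succ hi)
    have htail_le := htail k (left_mem_Ico.2 hkn)
    rw [hIcc, sum_insert (by simp), sum_insert (by simp), hweights, Nat.sub_self, pow_zero,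
      one_mul, add_comm (x k)]
    calc f (x k) + w * ∑ i ∈ Icc (k + 1) n, w ^ (i - (k + 1)) * f (x i)
        ≤ f (x k) + w * f (∑ j ∈ Icc (k + 1) n, x j) := by gcongr
      _ ≤ _ := hf _ _ htail_nonneg htail_le

theorem iterated_weighted_power_ge (n : ℕ) (hn : 1 ≤ n) (x : ℕ → ℝ) (μ : ℝ)
    (hx : ∀ i ∈ Finset.Icc 1 n, 0 ≤ x i)
    (hord : ∀ i, 1 ≤ i → i ≤ n - 1 → ∑ j ∈ Finset.Icc (i + 1) n, x j ≤ x i)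
    (hμ : 1 ≤ μ) :
    (∑ i ∈ Finset.Icc 1 n, x i) ^ μ ≥
      ∑ i ∈ Finset.Icc 1 n, (2 ^ μ - 1) ^ (i - 1) * x i ^ μ := by
  have hw : 0 ≤ (2 : ℝ) ^ μ - 1 :=
    sub_nonneg.2 (Real.one_le_rpow one_le_two (zero_le_one.trans hμ))
  exact sum_Icc_pow_mul_map_le_map_sum hw
    (fun _ _ hb hbc => Real.rpow_add_mul_rpow_le_add_rpow hμ hb hbc) hn hx
    (fun i hi => hord i (Finset.mem_Ico.1 hi).1 (by grind))
end

section
/- For every real number α with (√7 − 1)/2 ≤ α ≤ (√13 − 1)/2 and α ≠ 1, the function f_α is monotonically increasing on the interval [0, 1]: for all x, y with 0 ≤ x ≤ y ≤ 1, f_α(x) ≤ f_α(y). -/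
/-! With `s = √(1 - x)`, which decreases from `1` to `0` as `x` runs over `[0, 1]`, the argument
of the logarithm is `φ((1 - s)/2) + φ((1 + s)/2)` for `φ t = t ^ α`. Spreading two points apart
while keeping their sum fixed increases such a sum when `φ` is convex (`α > 1`) and decreases it
when `φ` is concave (`0 ≤ α < 1`); the sign of `1 / (1 - α)` turns both cases into monotonicity
of `f_α` in `x`. -/

/-- The function `f_α` through which the Rényi-α entanglement of a two-qubit
state is expressed in terms of the concurrence. -/
noncomputable def fRenyi (α x : ℝ) : ℝ :=
  (1 / (1 - α)) *
    Real.logb 2 (((1 - Real.sqrt (1 - x)) / 2) ^ α + ((1 + Real.sqrt (1 - x)) / 2) ^ α)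

open Set Real

section TwoPointMajorization

variable {𝕜 β : Type*} [Field 𝕜] [LinearOrder 𝕜] [IsStrictOrderedRing 𝕜]
  [AddCommMonoid β] [PartialOrder β] [IsOrderedAddMonoid β] [Module 𝕜 β]
  {s : Set 𝕜} {f : 𝕜 → β} {a b c d : 𝕜}

theorem ConvexOn.map_add_map_le_of_add_eq_s6 (hf : ConvexOn 𝕜 s f) (ha : a ∈ s) (hd : d ∈ s)
    (hab : a ≤ b) (hac : a ≤ c) (h : b + c = a + d) : f b + f c ≤ f a + f d := by
  -- `b` and `c` are the convex combinations of `a` and `d` with the same two weights, swapped.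
  rcases (show a ≤ d by linarith).eq_or_lt with rfl | had
  · obtain rfl : b = a := by linarith
    obtain rfl : c = b := by linarith
    rfl
  have hda : d - a ≠ 0 := (sub_pos.2 had).ne'
  set l := (d - b) / (d - a)
  set m := (b - a) / (d - a)
  have hl : 0 ≤ l := div_nonneg (by linarith) (by linarith)
  have hm : 0 ≤ m := div_nonneg (by linarith) (by linarith)
  have hlm : l + m = 1 := by simp only [l, m]; field_simp; ring
  have hb : l • a + m • d = b := by simp only [l, m, smul_eq_mul]; field_simp; ring
  have hc : m • a + l • d = c := by
    rw [show c = a + d - b by linear_combination h]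
    simp only [l, m, smul_eq_mul]; field_simp; ring
  calc f b + f c = f (l • a + m • d) + f (m • a + l • d) := by rw [hb, hc]
    _ ≤ (l • f a + m • f d) + (m • f a + l • f d) :=
      add_le_add (hf.2 ha hd hl hm hlm) (hf.2 ha hd hm hl (by rw [add_comm, hlm]))
    _ = (l + m) • f a + (l + m) • f d := by module
    _ = f a + f d := by rw [hlm, one_smul, one_smul]

theorem ConcaveOn.map_add_map_le_of_add_eq_s6 (hf : ConcaveOn 𝕜 s f) (ha : a ∈ s) (hd : d ∈ s)
    (hab : a ≤ b) (hac : a ≤ c) (h : b + c = a + d) : f a + f d ≤ f b + f c :=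
  hf.dual.map_add_map_le_of_add_eq_s6 ha hd hab hac h

end TwoPointMajorization

noncomputable def renyiPowerSum (α s : ℝ) : ℝ := ((1 - s) / 2) ^ α + ((1 + s) / 2) ^ α

theorem renyiPowerSum_pos (α : ℝ) {s : ℝ} (hs : s ∈ Icc (0 : ℝ) 1) : 0 < renyiPowerSum α s :=
  add_pos_of_nonneg_of_pos (rpow_nonneg (by linarith [hs.2]) α)
    (rpow_pos_of_pos (by linarith [hs.1]) α)

theorem renyiPowerSum_monotoneOn {α : ℝ} (hα : 1 ≤ α) : MonotoneOn (renyiPowerSum α) (Icc 0 1) :=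
  fun s hs t ht hst ↦ (convexOn_rpow hα).map_add_map_le_of_add_eq_s6
    (mem_Ici.2 (by linarith [ht.2])) (mem_Ici.2 (by linarith [ht.1]))
    (by linarith) (by linarith [hs.1]) (by ring)

theorem renyiPowerSum_antitoneOn {α : ℝ} (hα₀ : 0 ≤ α) (hα₁ : α ≤ 1) :
    AntitoneOn (renyiPowerSum α) (Icc 0 1) :=
  fun s hs t ht hst ↦ (concaveOn_rpow hα₀ hα₁).map_add_map_le_of_add_eq_s6
    (mem_Ici.2 (by linarith [ht.2])) (mem_Ici.2 (by linarith [ht.1]))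
    (by linarith) (by linarith [hs.1]) (by ring)

theorem fRenyi_monotone_general (α : ℝ) (hα1 : (Real.sqrt 7 - 1) / 2 ≤ α)
    (hα : α ≠ 1) :
    ∀ x y : ℝ, 0 ≤ x → x ≤ y → y ≤ 1 → fRenyi α x ≤ fRenyi α y := by
  have hα₀ : 0 ≤ α := by
    have : 1 < √7 := by rw [lt_sqrt zero_le_one]; norm_num
    linarith
  intro x y hx hxy hy
  have hs : √(1 - y) ∈ Icc (0 : ℝ) 1 := ⟨sqrt_nonneg _, sqrt_le_one.2 (by linarith)⟩
  have ht : √(1 - x) ∈ Icc (0 : ℝ) 1 := ⟨sqrt_nonneg _, sqrt_le_one.2 (by linarith)⟩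
  have hst : √(1 - y) ≤ √(1 - x) := sqrt_le_sqrt (by linarith)
  change 1 / (1 - α) * logb 2 (renyiPowerSum α √(1 - x))
    ≤ 1 / (1 - α) * logb 2 (renyiPowerSum α √(1 - y))
  rcases hα.lt_or_gt with hlt | hgt
  · refine mul_le_mul_of_nonneg_left ?_ (one_div_nonneg.2 (by linarith))
    exact logb_le_logb_of_le one_lt_two (renyiPowerSum_pos α ht)
      (renyiPowerSum_antitoneOn hα₀ hlt.le hs ht hst)
  · refine mul_le_mul_of_nonpos_left ?_ (one_div_nonpos.2 (by linarith))
    exact logb_le_logb_of_le one_lt_two (renyiPowerSum_pos α hs)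
      (renyiPowerSum_monotoneOn hgt.le hs ht hst)

theorem fRenyi_monotone (α : ℝ) (hα1 : (Real.sqrt 7 - 1) / 2 ≤ α)
    (hα2 : α ≤ (Real.sqrt 13 - 1) / 2) (hα : α ≠ 1) :
    ∀ x y : ℝ, 0 ≤ x → x ≤ y → y ≤ 1 → fRenyi α x ≤ fRenyi α y :=
  fRenyi_monotone_general α hα1 hα
end

section
/- Let α be a real number with (√7 − 1)/2 ≤ α ≤ (√13 − 1)/2 and α ≠ 1. Then for all nonnegative real numbers x and y with x² + y² ≤ 1, one has f_α(√(x² + y²)) ≤ f_α(x) + f_α(y). -/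
/-!
Write `x = 4p(1-p)` with `p = (1 - √(1-x))/2 ∈ (0, 1/2]`. Then `f_α(x) = x² Ψ(p)`, where
`Ψ(p) = H_α(p) / (4p(1-p))²` and `H_α` is the binary Rényi entropy. Since `p` grows with `x`, the
inequality follows once `Ψ` is antitone on `(0, 1/2]`: for `z² = x² + y²`,
`z² Ψ(p_z) = x² Ψ(p_z) + y² Ψ(p_z) ≤ x² Ψ(p_x) + y² Ψ(p_y)`.

The sign of `Ψ'` is that of `-(α - 1) N(p)`, where `σ = p^α + (1-p)^α` and
`N = α((1-p)p^α - p(1-p)^α) - 2(1-2p) σ log σ`. Bounding `σ log σ` linearly in `σ` (from below by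
`σ - 1` when `α < 1`; from above by `2^(1-α)(σ - 1)` when `α > 1`, as `2σ ≥ 2^(2-α)` by convexity)
reduces this to the sign of `E_κ = α((1-p)p^α - p(1-p)^α) - κ(1-2p)(σ - 1)` for `κ = 2`, resp.
`κ = 2^(2-α)`; the latter is where `α ≤ 2^(2-α)` (true for `α ≤ 7/5`) comes in. For `α ≤ κ`
and `α ≤ 2`, `(α - 1) E_κ` is concave on `[0, 1/2]` and vanishes at both ends, hence is
nonnegative there.
-/

open Real Set

lemma mul_rpow_le_mul_rpow {p q : ℝ} (s : ℝ) (hp : 0 < p) (hpq : p ≤ q) :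
    s * p ^ s ≤ s * q ^ s := by
  rcases le_total 0 s with hs | hs
  · exact mul_le_mul_of_nonneg_left (rpow_le_rpow hp.le hpq hs) hs
  · exact mul_le_mul_of_nonpos_left (rpow_le_rpow_of_nonpos hp hpq hs) hs

section RenyiGap

variable (α κ : ℝ) {p q : ℝ}

noncomputable def renyiGap (p : ℝ) : ℝ :=
  α * ((1 - p) * p ^ α - p * (1 - p) ^ α) - κ * (1 - 2 * p) * (p ^ α + (1 - p) ^ α - 1)

noncomputable def gapTerm (p : ℝ) : ℝ := ((2 * κ - α) * p + (α - κ)) * p ^ α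

noncomputable def gapTermDeriv (p : ℝ) : ℝ :=
  (2 * κ - α) * (α + 1) * p ^ α + (α - κ) * α * p ^ (α - 1)

noncomputable def gapTermDeriv2 (p : ℝ) : ℝ :=
  (2 * κ - α) * (α + 1) * α * p ^ (α - 1) + (α - κ) * α * (α - 1) * p ^ (α - 2)

lemma renyiGap_eq_gapTerm :
    renyiGap α κ = fun p ↦ κ * (1 - 2 * p) + gapTerm α κ p - gapTerm α κ (1 - p) := by
  ext p
  simp only [renyiGap, gapTerm]
  ring

lemma hasDerivAt_gapTerm (hp : p ≠ 0) : HasDerivAt (gapTerm α κ) (gapTermDeriv α κ p) p := by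
  have hpow : p ^ (α - 1) * p = p ^ α := by rw [← rpow_add_one hp]; ring_nf
  refine ((((hasDerivAt_id p).const_mul (2 * κ - α)).add_const (α - κ)).mul
    (hasDerivAt_rpow_const (p := α) (Or.inl hp))).congr_deriv ?_
  simp only [gapTermDeriv, id]
  linear_combination ((2 * κ - α) * α) * hpow

lemma hasDerivAt_gapTermDeriv (hp : p ≠ 0) :
    HasDerivAt (gapTermDeriv α κ) (gapTermDeriv2 α κ p) p := by
  refine (((hasDerivAt_rpow_const (p := α) (Or.inl hp)).const_mul ((2 * κ - α) * (α + 1))).add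
    ((hasDerivAt_rpow_const (p := α - 1) (Or.inl hp)).const_mul ((α - κ) * α))).congr_deriv ?_
  rw [gapTermDeriv2, sub_sub, one_add_one_eq_two]
  ring

lemma hasDerivAt_renyiGap (hp₀ : p ≠ 0) (hp₁ : p ≠ 1) :
    HasDerivAt (renyiGap α κ)
      (-2 * κ + gapTermDeriv α κ p + gapTermDeriv α κ (1 - p)) p := by
  have hq : HasDerivAt (fun p ↦ 1 - p) (-1) p := (hasDerivAt_id p).const_sub 1
  rw [renyiGap_eq_gapTerm]
  refine (((((hasDerivAt_id p).const_mul 2).const_sub 1).const_mul κ).add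
    (hasDerivAt_gapTerm α κ hp₀) |>.sub
      ((hasDerivAt_gapTerm α κ (sub_ne_zero.2 hp₁.symm)).comp p hq)).congr_deriv ?_
  ring

lemma hasDerivAt_renyiGapDeriv (hp₀ : p ≠ 0) (hp₁ : p ≠ 1) :
    HasDerivAt (fun p ↦ -2 * κ + gapTermDeriv α κ p + gapTermDeriv α κ (1 - p))
      (gapTermDeriv2 α κ p - gapTermDeriv2 α κ (1 - p)) p := by
  have hq : HasDerivAt (fun p ↦ 1 - p) (-1) p := (hasDerivAt_id p).const_sub 1
  refine (((hasDerivAt_gapTermDeriv α κ hp₀).const_add (-2 * κ)).add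
    ((hasDerivAt_gapTermDeriv α κ (sub_ne_zero.2 hp₁.symm)).comp p hq)).congr_deriv ?_
  ring

variable {α κ}

lemma sub_one_mul_gapTermDeriv2_le (hα₀ : 0 < α) (hα₂ : α ≤ 2) (hακ : α ≤ κ)
    (hp : 0 < p) (hpq : p ≤ q) :
    (α - 1) * gapTermDeriv2 α κ p ≤ (α - 1) * gapTermDeriv2 α κ q := by
  have h₁ := mul_rpow_le_mul_rpow (α - 1) hp hpq
  have h₂ : q ^ (α - 2) ≤ p ^ (α - 2) := rpow_le_rpow_of_nonpos hp hpq (by linarith)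
  have ha : 0 ≤ (2 * κ - α) * (α + 1) * α := by
    have : 0 ≤ 2 * κ - α := by linarith
    positivity
  have hb : 0 ≤ (κ - α) * α * (α - 1) ^ 2 := by
    have : 0 ≤ κ - α := by linarith
    positivity
  simp only [gapTermDeriv2]
  nlinarith [mul_le_mul_of_nonneg_left h₁ ha, mul_le_mul_of_nonneg_left h₂ hb]

lemma continuous_renyiGap (hα₀ : 0 ≤ α) : Continuous (renyiGap α κ) := by
  have := continuous_rpow_const hα₀
  unfold renyiGap
  fun_prop

lemma sub_one_mul_renyiGap_nonneg (hα₀ : 0 < α) (hα₂ : α ≤ 2) (hακ : α ≤ κ)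
    (hp₀ : 0 ≤ p) (hp : p ≤ 1 / 2) : 0 ≤ (α - 1) * renyiGap α κ p := by
  have hconc : ConcaveOn ℝ (Icc 0 (1 / 2)) fun p ↦ (α - 1) * renyiGap α κ p := by
    refine concaveOn_of_hasDerivWithinAt2_nonpos (convex_Icc _ _)
      (f' := fun p ↦ (α - 1) * (-2 * κ + gapTermDeriv α κ p + gapTermDeriv α κ (1 - p)))
      (f'' := fun p ↦ (α - 1) * (gapTermDeriv2 α κ p - gapTermDeriv2 α κ (1 - p)))
      (continuous_const.mul (continuous_renyiGap hα₀.le)).continuousOn ?_ ?_ ?_ <;>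
    rw [interior_Icc] <;> rintro s ⟨hs₀, hs⟩
    · exact ((hasDerivAt_renyiGap α κ hs₀.ne' (by linarith)).const_mul _).hasDerivWithinAt
    · exact ((hasDerivAt_renyiGapDeriv α κ hs₀.ne' (by linarith)).const_mul _).hasDerivWithinAt
    · have := sub_one_mul_gapTermDeriv2_le hα₀ hα₂ hακ hs₀ (by linarith : s ≤ 1 - s)
      linarith
  have h₀ : renyiGap α κ 0 = 0 := by simp [renyiGap, zero_rpow hα₀.ne']
  have h₁ : renyiGap α κ (1 / 2) = 0 := by norm_num [renyiGap]
  have hseg : p ∈ segment ℝ 0 (1 / 2 : ℝ) := by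
    rw [segment_eq_Icc (by norm_num)]
    exact ⟨hp₀, hp⟩
  have := hconc.ge_on_segment (left_mem_Icc.2 (by norm_num)) (right_mem_Icc.2 (by norm_num)) hseg
  rwa [h₀, h₁, mul_zero, min_self] at this

end RenyiGap

lemma two_rpow_two_sub_le {α p : ℝ} (hα : 1 ≤ α) (hp₀ : 0 ≤ p) (hp₁ : p ≤ 1) :
    2 ^ (2 - α) ≤ 2 * (p ^ α + (1 - p) ^ α) := by
  have h := (convexOn_rpow hα).2 (mem_Ici.2 hp₀) (mem_Ici.2 (sub_nonneg.2 hp₁))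
    (by norm_num : (0 : ℝ) ≤ 1 / 2) (by norm_num : (0 : ℝ) ≤ 1 / 2) (by norm_num)
  have hmid : 1 / 2 * p + 1 / 2 * (1 - p) = 1 / 2 := by ring
  simp only [smul_eq_mul] at h
  rw [hmid, div_rpow zero_le_one zero_le_two, one_rpow] at h
  rw [rpow_sub two_pos, rpow_two]
  have : (0 : ℝ) < 2 ^ α := by positivity
  rw [div_le_iff₀ this]
  rw [div_le_iff₀ this] at h
  nlinarith

lemma lt_two_of_le_two_rpow_two_sub {α : ℝ} (h : α ≤ 2 ^ (2 - α)) : α < 2 := by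
  by_contra! hα
  have : (2 : ℝ) ^ (2 - α) ≤ 2 ^ (0 : ℝ) := rpow_le_rpow_of_exponent_le one_le_two (by linarith)
  rw [rpow_zero] at this
  linarith

noncomputable def renyiRatioNumer (α p : ℝ) : ℝ :=
  α * ((1 - p) * p ^ α - p * (1 - p) ^ α) -
    2 * (1 - 2 * p) * ((p ^ α + (1 - p) ^ α) * log (p ^ α + (1 - p) ^ α))

lemma renyiRatioNumer_eq_renyiGap_add (α κ p : ℝ) :
    renyiRatioNumer α p = renyiGap α κ p + (1 - 2 * p) *
      (κ * (p ^ α + (1 - p) ^ α - 1) -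
        2 * ((p ^ α + (1 - p) ^ α) * log (p ^ α + (1 - p) ^ α))) := by
  simp only [renyiRatioNumer, renyiGap]
  ring

lemma sub_one_mul_renyiRatioNumer_nonneg {α p : ℝ} (hα₀ : 0 < α) (hα : α ≤ 2 ^ (2 - α))
    (hp₀ : 0 < p) (hp : p ≤ 1 / 2) : 0 ≤ (α - 1) * renyiRatioNumer α p := by
  have hq₀ : 0 < 1 - p := by linarith
  have hd : 0 ≤ 1 - 2 * p := by linarith
  set σ := p ^ α + (1 - p) ^ α
  have hσ₀ : 0 < σ := by positivity
  rcases lt_trichotomy α 1 with hα₁ | rfl | hα₁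
  · have hgap := sub_one_mul_renyiGap_nonneg (κ := 2) hα₀ (by linarith) (by linarith) hp₀.le hp
    have hσ₁ : 1 ≤ σ := by
      have := self_le_rpow_of_le_one hp₀.le (by linarith) hα₁.le
      have := self_le_rpow_of_le_one hq₀.le (by linarith) hα₁.le
      linarith
    have hlog : σ - 1 ≤ σ * log σ := by
      have := one_sub_inv_le_log_of_pos hσ₀
      rwa [← mul_le_mul_iff_of_pos_left hσ₀, mul_sub, mul_inv_cancel₀ hσ₀.ne', mul_one] at this
    rw [renyiRatioNumer_eq_renyiGap_add α 2 p, mul_add]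
    exact add_nonneg hgap (mul_nonneg_of_nonpos_of_nonpos (by linarith)
      (mul_nonpos_of_nonneg_of_nonpos hd (by linarith)))
  · simp
  · set κ : ℝ := 2 ^ (2 - α)
    have hgap :=
      sub_one_mul_renyiGap_nonneg hα₀ (lt_two_of_le_two_rpow_two_sub hα).le hα hp₀.le hp
    have hσ₁ : σ ≤ 1 := by
      have := rpow_le_self_of_le_one hp₀.le (by linarith) hα₁.le
      have := rpow_le_self_of_le_one hq₀.le (by linarith) hα₁.le
      linarith
    have hlog : 2 * (σ * log σ) ≤ κ * (σ - 1) :=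
      calc 2 * (σ * log σ) ≤ 2 * σ * (σ - 1) := by
            nlinarith [mul_le_mul_of_nonneg_left (log_le_sub_one_of_pos hσ₀) hσ₀.le]
        _ ≤ κ * (σ - 1) :=
            mul_le_mul_of_nonpos_right (two_rpow_two_sub_le hα₁.le hp₀.le (by linarith))
              (by linarith)
    rw [renyiRatioNumer_eq_renyiGap_add α κ p, mul_add]
    exact add_nonneg hgap (mul_nonneg (by linarith) (mul_nonneg hd (by linarith)))

noncomputable def binaryRenyi (α p : ℝ) : ℝ := 1 / (1 - α) * logb 2 (p ^ α + (1 - p) ^ α)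

noncomputable def renyiRatio (α p : ℝ) : ℝ := binaryRenyi α p / (4 * p * (1 - p)) ^ 2

lemma hasDerivAt_renyiRatio {α p : ℝ} (hp₀ : 0 < p) (hp₁ : p < 1) :
    HasDerivAt (renyiRatio α) (1 / (1 - α) * (renyiRatioNumer α p /
      (log 2 * (16 * (p ^ α + (1 - p) ^ α) * (p * (1 - p)) ^ 3)))) p := by
  have hq₀ : 0 < 1 - p := by linarith
  have hσ₀ : 0 < p ^ α + (1 - p) ^ α := by positivity
  have hσ : HasDerivAt (fun p ↦ p ^ α + (1 - p) ^ α)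
      (α * p ^ (α - 1) - α * (1 - p) ^ (α - 1)) p := by
    refine ((hasDerivAt_rpow_const (Or.inl hp₀.ne')).add ((hasDerivAt_rpow_const
      (Or.inl hq₀.ne')).comp p ((hasDerivAt_id p).const_sub 1))).congr_deriv ?_
    ring
  have hD : HasDerivAt (fun p ↦ (4 * p * (1 - p)) ^ 2) (32 * p * (1 - p) * (1 - 2 * p)) p := by
    refine ((((hasDerivAt_id p).const_mul 4).mul
      ((hasDerivAt_id p).const_sub 1)).pow 2).congr_deriv ?_
    simp only [id, Pi.mul_apply]
    ring
  have hlog2 : 0 < log 2 := log_pos one_lt_two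
  have hΨ : renyiRatio α =
      fun p ↦ 1 / (1 - α) * (log (p ^ α + (1 - p) ^ α) / log 2 / (4 * p * (1 - p)) ^ 2) := by
    ext p
    simp only [renyiRatio, binaryRenyi, logb]
    ring
  rw [hΨ]
  refine ((((hσ.log hσ₀.ne').div_const (log 2)).div hD (by positivity)).const_mul
    (1 / (1 - α))).congr_deriv ?_
  congr 1
  rw [renyiRatioNumer, rpow_sub_one hp₀.ne', rpow_sub_one hq₀.ne']
  field_simp
  ring

lemma renyiRatio_antitoneOn {α : ℝ} (hα₀ : 0 < α) (hα : α ≤ 2 ^ (2 - α)) :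
    AntitoneOn (renyiRatio α) (Ioc 0 (1 / 2)) := by
  have hderiv : ∀ p ∈ Ioc (0 : ℝ) (1 / 2), HasDerivAt (renyiRatio α) _ p :=
    fun p hp ↦ hasDerivAt_renyiRatio hp.1 (by linarith [hp.2])
  refine antitoneOn_of_deriv_nonpos (convex_Ioc 0 (1 / 2))
    (fun p hp ↦ (hderiv p hp).continuousAt.continuousWithinAt)
    (fun p hp ↦ (hderiv p (interior_subset hp)).differentiableAt.differentiableWithinAt) ?_
  rw [interior_Ioc]
  rintro p ⟨hp₀, hp⟩
  rw [(hderiv p ⟨hp₀, hp.le⟩).deriv]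
  rcases eq_or_ne α 1 with rfl | hα₁
  · simp
  have hN := sub_one_mul_renyiRatioNumer_nonneg hα₀ hα hp₀ hp.le
  have hq₀ : 0 < 1 - p := by linarith
  set K := log 2 * (16 * (p ^ α + (1 - p) ^ α) * (p * (1 - p)) ^ 3)
  have hK : 0 < K := by have := log_pos one_lt_two; positivity
  have h₁ : 1 - α ≠ 0 := sub_ne_zero.2 hα₁.symm
  have h₂ : α - 1 ≠ 0 := sub_ne_zero.2 hα₁
  rw [show 1 / (1 - α) * (renyiRatioNumer α p / K) =
      -((α - 1) * renyiRatioNumer α p) / ((α - 1) ^ 2 * K) by field_simp; ring]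
  exact div_nonpos_of_nonpos_of_nonneg (neg_nonpos.2 hN) (by positivity)

noncomputable def schmidtWeight (x : ℝ) : ℝ := (1 - √(1 - x)) / 2

lemma schmidtWeight_monotone : Monotone schmidtWeight := fun x y hxy ↦ by
  unfold schmidtWeight
  linarith [sqrt_le_sqrt (by linarith : 1 - y ≤ 1 - x)]

lemma schmidtWeight_mem_Ioc {x : ℝ} (hx₀ : 0 < x) :
    schmidtWeight x ∈ Ioc 0 (1 / 2) := by
  have : √(1 - x) < 1 := (sqrt_lt' one_pos).2 (by linarith)
  constructor <;> unfold schmidtWeight <;> linarith [sqrt_nonneg (1 - x)]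

lemma four_mul_schmidtWeight_mul {x : ℝ} (hx : x ≤ 1) :
    4 * schmidtWeight x * (1 - schmidtWeight x) = x := by
  unfold schmidtWeight
  linear_combination -sq_sqrt (sub_nonneg.2 hx)

lemma fRenyi_eq_binaryRenyi (α x : ℝ) : fRenyi α x = binaryRenyi α (schmidtWeight x) := by
  rw [fRenyi, binaryRenyi, schmidtWeight,
    show 1 - (1 - √(1 - x)) / 2 = (1 + √(1 - x)) / 2 by ring]

lemma fRenyi_eq_sq_mul_renyiRatio {α x : ℝ} (hα₀ : 0 < α) (hx₀ : 0 ≤ x) (hx₁ : x ≤ 1) :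
    fRenyi α x = x ^ 2 * renyiRatio α (schmidtWeight x) := by
  rcases hx₀.eq_or_lt with rfl | hx₀
  · simp [fRenyi, zero_rpow hα₀.ne']
  rw [renyiRatio, four_mul_schmidtWeight_mul hx₁, fRenyi_eq_binaryRenyi]
  field_simp

lemma sq_mul_renyiRatio_schmidtWeight_le {α x z : ℝ} (hα₀ : 0 < α) (hα : α ≤ 2 ^ (2 - α))
    (hx₀ : 0 ≤ x) (hxz : x ≤ z) :
    x ^ 2 * renyiRatio α (schmidtWeight z) ≤ x ^ 2 * renyiRatio α (schmidtWeight x) := by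
  rcases hx₀.eq_or_lt with rfl | hx₀
  · simp
  exact mul_le_mul_of_nonneg_left (renyiRatio_antitoneOn hα₀ hα
    (schmidtWeight_mem_Ioc hx₀) (schmidtWeight_mem_Ioc (hx₀.trans_le hxz))
    (schmidtWeight_monotone hxz)) (sq_nonneg x)

theorem fRenyi_sqrt_sq_add_sq_le {α x y : ℝ} (hα₀ : 0 < α) (hα : α ≤ 2 ^ (2 - α))
    (hx : 0 ≤ x) (hy : 0 ≤ y) (hxy : x ^ 2 + y ^ 2 ≤ 1) :
    fRenyi α √(x ^ 2 + y ^ 2) ≤ fRenyi α x + fRenyi α y := by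
  set z := √(x ^ 2 + y ^ 2)
  have hz : z ^ 2 = x ^ 2 + y ^ 2 := sq_sqrt (by positivity)
  have hz₁ : z ≤ 1 := sqrt_le_one.2 hxy
  have hxz : x ≤ z := le_sqrt_of_sq_le (by nlinarith)
  have hyz : y ≤ z := le_sqrt_of_sq_le (by nlinarith)
  rw [fRenyi_eq_sq_mul_renyiRatio hα₀ (hx.trans hxz) hz₁,
    fRenyi_eq_sq_mul_renyiRatio hα₀ hx (hxz.trans hz₁),
    fRenyi_eq_sq_mul_renyiRatio hα₀ hy (hyz.trans hz₁), hz, add_mul]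
  exact add_le_add (sq_mul_renyiRatio_schmidtWeight_le hα₀ hα hx hxz)
    (sq_mul_renyiRatio_schmidtWeight_le hα₀ hα hy hyz)

lemma le_two_rpow_two_sub {α : ℝ} (h : α ≤ 7 / 5) : α ≤ 2 ^ (2 - α) := by
  have hexp := add_one_le_exp (log 2 * (2 - α))
  rw [← rpow_def_of_pos two_pos] at hexp
  nlinarith [log_two_gt_d9]

theorem fRenyi_subadditive_general (α : ℝ) (hα1 : (Real.sqrt 7 - 1) / 2 ≤ α)
    (hα2 : α ≤ (Real.sqrt 13 - 1) / 2) (x y : ℝ)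
    (hx : 0 ≤ x) (hy : 0 ≤ y) (hxy : x ^ 2 + y ^ 2 ≤ 1) :
    fRenyi α (Real.sqrt (x ^ 2 + y ^ 2)) ≤ fRenyi α x + fRenyi α y := by
  have h7 : 1 < √7 := (lt_sqrt zero_le_one).2 (by norm_num)
  have h13 : √13 ≤ 19 / 5 := (sqrt_le_left (by norm_num)).2 (by norm_num)
  exact fRenyi_sqrt_sq_add_sq_le (by linarith) (le_two_rpow_two_sub (by linarith)) hx hy hxy

theorem fRenyi_subadditive (α : ℝ) (hα1 : (Real.sqrt 7 - 1) / 2 ≤ α)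
    (hα2 : α ≤ (Real.sqrt 13 - 1) / 2) (hα : α ≠ 1) (x y : ℝ)
    (hx : 0 ≤ x) (hy : 0 ≤ y) (hxy : x ^ 2 + y ^ 2 ≤ 1) :
    fRenyi α (Real.sqrt (x ^ 2 + y ^ 2)) ≤ fRenyi α x + fRenyi α y :=
  fRenyi_subadditive_general α hα1 hα2 x y hx hy hxy
end

section
/- Let α be a real number with (√7 − 1)/2 ≤ α ≤ (√13 − 1)/2 and α ≠ 1, let μ be a real number with 0 ≤ μ ≤ 1, let n ≥ 2, and let a₁, …, aₙ be nonnegative real numbers with aᵢ ≤ 1 for all i, such that 1 ≤ a₁² + ⋯ + aₙ² and aᵢ² ≥ a_{i+1}² + ⋯ + aₙ² for every i with 1 ≤ i ≤ n − 1. Then [f_α(1)]^μ ≤ Σ_{i=1}^{n} (2^μ − 1)^{i−1} · [f_α(aᵢ)]^μ. -/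
lemma lemB (μ x y : ℝ) (hμ0 : 0 ≤ μ) (hμ1 : μ ≤ 1) (hy : 0 ≤ y) (hxy : y ≤ x) :
    (x + y) ^ μ ≤ x ^ μ + (2 ^ μ - 1) * y ^ μ := by
  rcases eq_or_lt_of_le hμ0 with rfl | hμpos
  · simp [Real.rpow_zero]
  rcases eq_or_lt_of_le hy with rfl | hypos
  · simp [Real.zero_rpow (ne_of_gt hμpos)]
  have hx : 0 < x := lt_of_lt_of_le hypos hxy
  have hcc := Real.concaveOn_rpow hμ0 hμ1
  set f : ℝ → ℝ := fun w : ℝ => w ^ μ with hf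
  -- λ = (x - y)/x
  set l : ℝ := (x - y) / x with hl
  have hl0 : 0 ≤ l := div_nonneg (by linarith) hx.le
  have hl1 : l ≤ 1 := by rw [hl, div_le_one hx]; linarith
  have hsum : l + (1 - l) = 1 := by ring
  have h1 := hcc.2 (Set.mem_Ici.2 hy) (Set.mem_Ici.2 (by positivity : (0:ℝ) ≤ x + y))
    hl0 (by linarith) hsum
  have h2 := hcc.2 (Set.mem_Ici.2 hy) (Set.mem_Ici.2 (by positivity : (0:ℝ) ≤ x + y))
    (by linarith : (0:ℝ) ≤ 1 - l) hl0 (by ring)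
  have e1 : l • y + (1 - l) • (x + y) = 2 * y := by
    simp only [smul_eq_mul, hl]; field_simp; ring
  have e2 : (1 - l) • y + l • (x + y) = x := by
    simp only [smul_eq_mul, hl]; field_simp; ring
  rw [e1] at h1; rw [e2] at h2
  have key : f (x + y) + f y ≤ f x + f (2 * y) := by
    have := add_le_add h1 h2
    simp only [smul_eq_mul] at this ⊢
    nlinarith [this]
  have h2y : f (2 * y) = 2 ^ μ * y ^ μ := Real.mul_rpow (by norm_num) hy
  simp only [hf] at key h2y
  nlinarith [key, h2y]


lemma claim1 (x : ℝ) (hx0 : 0 ≤ x) (hx1 : x ≤ 1) :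
    x ^ 2 * Real.log 2 ≤ -Real.log (1 - x / 2) := by
  set u : ℝ := x / 2 with hu
  have hu0 : 0 ≤ u := by positivity
  have hu2 : u ≤ 1 / 2 := by rw [hu]; linarith
  have hl2 : (0.6931471803 : ℝ) < Real.log 2 := Real.log_two_gt_d9
  have hl2' : Real.log 2 < 0.6931471808 := Real.log_two_lt_d9
  have hexp : 1 - u ≤ Real.exp (-(4 * Real.log 2) * u ^ 2) := by
    rcases le_or_gt u (1/4) with hc | hc
    · calc 1 - u ≤ 1 + (-(4 * Real.log 2) * u ^ 2) := by nlinarith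
        _ ≤ Real.exp (-(4 * Real.log 2) * u ^ 2) := by
            linarith [Real.add_one_le_exp (-(4 * Real.log 2) * u ^ 2)]
    · have hb : (0:ℝ) ≤ Real.log 2 * (1 + 2*u) - 1 := by
        nlinarith [mul_le_mul_of_nonneg_right hl2.le (by linarith : (0:ℝ) ≤ 1 + 2*u)]
      have key : 1 - u ≤ (1 + Real.log 2 * (1 - 4 * u ^ 2)) / 2 := by
        nlinarith [mul_nonneg (by linarith : (0:ℝ) ≤ 1 - 2*u) hb]
      calc 1 - u ≤ (1 + Real.log 2 * (1 - 4 * u ^ 2)) / 2 := key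
        _ ≤ Real.exp (Real.log 2 * (1 - 4 * u ^ 2)) / 2 := by
            linarith [Real.add_one_le_exp (Real.log 2 * (1 - 4 * u ^ 2))]
        _ = Real.exp (-(4 * Real.log 2) * u ^ 2) := by
            rw [show Real.exp (Real.log 2 * (1 - 4 * u ^ 2)) / 2
                = Real.exp (Real.log 2 * (1 - 4 * u ^ 2) - Real.log 2) by
              rw [Real.exp_sub, Real.exp_log two_pos]]
            congr 1
            ring
  have hpos : 0 < 1 - u := by linarith
  have := (Real.log_le_iff_le_exp hpos).2 hexp
  have hx2 : x ^ 2 = 4 * u ^ 2 := by rw [hu]; ring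
  nlinarith [this]

lemma amhm (p q A B : ℝ) (hp : 0 < p) (hq : 0 < q) (hpq : p + q = 1)
    (hA : 0 < A) (hB : 0 < B) : (p * A + q * B)⁻¹ ≤ p * A⁻¹ + q * B⁻¹ := by
  rw [inv_le_iff_one_le_mul₀ (by positivity)]
  have h2 : 2 ≤ B / A + A / B := by
    rw [div_add_div _ _ (ne_of_gt hA) (ne_of_gt hB), le_div_iff₀ (by positivity)]
    nlinarith [sq_nonneg (A - B)]
  have e : (p * A⁻¹ + q * B⁻¹) * (p * A + q * B)
      = p ^ 2 + q ^ 2 + p * q * (B / A + A / B) := by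
    field_simp
    ring
  nlinarith [mul_pos hp hq, h2]

set_option maxHeartbeats 1000000 in
lemma lemA (α x : ℝ) (hα0 : 0 < α) (hα2 : α < 2) (hne : α ≠ 1) (hx0 : 0 ≤ x) (hx1 : x ≤ 1) :
    x ^ 2 ≤ fRenyi α x := by
  rcases eq_or_lt_of_le hx0 with h0 | hxpos
  · rw [← h0]
    simp [fRenyi, Real.sqrt_one, Real.zero_rpow (ne_of_gt hα0), Real.one_rpow]
  have h1x : 0 ≤ 1 - x := by linarith
  set t : ℝ := Real.sqrt (1 - x) with hT
  have ht0 : 0 ≤ t := Real.sqrt_nonneg _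
  have ht2 : t ^ 2 = 1 - x := Real.sq_sqrt h1x
  have ht1 : t < 1 := by nlinarith
  set p : ℝ := (1 - t) / 2 with hp
  set q : ℝ := (1 + t) / 2 with hq
  have hppos : 0 < p := by rw [hp]; linarith
  have hqpos : 0 < q := by rw [hq]; linarith
  have hpq : p + q = 1 := by rw [hp, hq]; ring
  set s : ℝ := 1 - x / 2 with hs
  have hs_eq : p * p + q * q = s := by rw [hp, hq, hs]; nlinarith [ht2]
  have hspos : 0 < s := by rw [hs]; linarith
  have hslog : Real.log s ≤ -(x ^ 2 * Real.log 2) := by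
    have := claim1 x hx0 hx1
    rw [← hs] at this; linarith
  have hlog2 : (0:ℝ) < Real.log 2 := Real.log_pos (by norm_num)
  have hPpos : 0 < p ^ α + q ^ α :=
    add_pos (Real.rpow_pos_of_pos hppos α) (Real.rpow_pos_of_pos hqpos α)
  unfold fRenyi
  rw [← hT, ← hp, ← hq, Real.logb]
  set L : ℝ := Real.log (p ^ α + q ^ α) with hL
  rcases lt_or_gt_of_ne hne with hlt | hgt
  · -- α < 1
    set β : ℝ := 1 - α with hβ
    have hβ0 : 0 < β := by rw [hβ]; linarith
    have hβ1 : β < 1 := by rw [hβ]; linarith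
    have hcc := Real.concaveOn_rpow hβ0.le hβ1.le
    have jensen : p * p ^ β + q * q ^ β ≤ s ^ β := by
      have := hcc.2 (Set.mem_Ici.2 hppos.le) (Set.mem_Ici.2 hqpos.le) hppos.le hqpos.le hpq
      simp only [smul_eq_mul] at this
      rwa [hs_eq] at this
    have hPβpos : 0 < p * p ^ β + q * q ^ β := by
      positivity
    have step1 : (s ^ β)⁻¹ ≤ (p * p ^ β + q * q ^ β)⁻¹ :=
      inv_anti₀ hPβpos jensen
    have step2 : (p * p ^ β + q * q ^ β)⁻¹ ≤ p * (p ^ β)⁻¹ + q * (q ^ β)⁻¹ :=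
      amhm p q (p ^ β) (q ^ β) hppos hqpos hpq
        (Real.rpow_pos_of_pos hppos β) (Real.rpow_pos_of_pos hqpos β)
    have hprec : p * (p ^ β)⁻¹ = p ^ α := by
      rw [show α = 1 + -β by rw [hβ]; ring, Real.rpow_add hppos, Real.rpow_one,
        Real.rpow_neg hppos.le]
    have hqrec : q * (q ^ β)⁻¹ = q ^ α := by
      rw [show α = 1 + -β by rw [hβ]; ring, Real.rpow_add hqpos, Real.rpow_one,
        Real.rpow_neg hqpos.le]
    have hsrec : s ^ (α - 1) = (s ^ β)⁻¹ := by
      rw [show α - 1 = -β by rw [hβ]; ring, Real.rpow_neg hspos.le]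
    have hmain : s ^ (α - 1) ≤ p ^ α + q ^ α := by
      rw [hsrec, ← hprec, ← hqrec]; linarith
    have hloglb : (α - 1) * Real.log s ≤ L := by
      rw [hL, ← Real.log_rpow hspos (α - 1)]
      exact Real.log_le_log (Real.rpow_pos_of_pos hspos _) hmain
    rw [div_mul_div_comm, one_mul,
      le_div_iff₀ (by positivity : (0:ℝ) < (1-α) * Real.log 2)]
    nlinarith [mul_nonneg (by linarith : (0:ℝ) ≤ 1 - α)
      (by linarith : (0:ℝ) ≤ -Real.log s - x ^ 2 * Real.log 2)]
  · -- α > 1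
    set r : ℝ := α - 1 with hr
    have hr0 : 0 < r := by rw [hr]; linarith
    have hr1 : r < 1 := by rw [hr]; linarith
    have hcc := Real.concaveOn_rpow hr0.le hr1.le
    have jensen : p * p ^ r + q * q ^ r ≤ s ^ r := by
      have := hcc.2 (Set.mem_Ici.2 hppos.le) (Set.mem_Ici.2 hqpos.le) hppos.le hqpos.le hpq
      simp only [smul_eq_mul] at this
      rwa [hs_eq] at this
    have hprec : p * p ^ r = p ^ α := by
      rw [show α = 1 + r by rw [hr]; ring, Real.rpow_add hppos, Real.rpow_one]
    have hqrec : q * q ^ r = q ^ α := by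
      rw [show α = 1 + r by rw [hr]; ring, Real.rpow_add hqpos, Real.rpow_one]
    have hmain : p ^ α + q ^ α ≤ s ^ (α - 1) := by
      rw [← hr, ← hprec, ← hqrec]; linarith
    have hlogub : L ≤ (α - 1) * Real.log s := by
      rw [hL, ← Real.log_rpow hspos (α - 1)]
      exact Real.log_le_log hPpos hmain
    rw [div_mul_div_comm, one_mul,
      le_div_iff_of_neg (mul_neg_of_neg_of_pos (by linarith) hlog2)]
    have hh := mul_nonneg (by linarith : (0:ℝ) ≤ α - 1)
      (by linarith : (0:ℝ) ≤ -Real.log s - x ^ 2 * Real.log 2)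
    nlinarith [hh]

lemma fRenyi_one (α : ℝ) (hne : α ≠ 1) : fRenyi α 1 = 1 := by
  unfold fRenyi
  rw [show (1:ℝ) - 1 = 0 by ring, Real.sqrt_zero]
  have h : ((1 - 0) / 2 : ℝ) ^ α + ((1 + 0) / 2 : ℝ) ^ α = (2:ℝ) ^ (1 - α) := by
    rw [Real.rpow_sub (by norm_num : (0:ℝ) < 2), Real.rpow_one]
    rw [show ((1 - 0) / 2 : ℝ) = 2⁻¹ by norm_num, show ((1 + 0) / 2 : ℝ) = 2⁻¹ by norm_num]
    rw [Real.inv_rpow (by norm_num : (0:ℝ) ≤ 2)]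
    rw [div_eq_mul_inv]
    ring
  rw [h, Real.logb_rpow (by norm_num) (by norm_num)]
  field_simp

lemma key_ind (μ : ℝ) (c : ℝ) (hc : c = 2 ^ μ - 1) (hμ0 : 0 ≤ μ) (hμ1 : μ ≤ 1)
    (n : ℕ) (a : ℕ → ℝ)
    (hord : ∀ i, 1 ≤ i → i ≤ n - 1 → ∑ j ∈ Finset.Icc (i + 1) n, a j ^ 2 ≤ a i ^ 2) :
    ∀ j k, k + j = n → 1 ≤ k →
      (∑ i ∈ Finset.Icc k n, a i ^ 2) ^ μ ≤
        ∑ i ∈ Finset.Icc k n, c ^ (i - k) * (a i ^ 2) ^ μ := by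
  have hc0 : 0 ≤ c := by
    rw [hc]
    have : (2:ℝ) ^ (0:ℝ) ≤ 2 ^ μ := Real.rpow_le_rpow_of_exponent_le (by norm_num) hμ0
    rw [Real.rpow_zero] at this
    linarith
  intro j
  induction j with
  | zero =>
    intro k hk hk1
    simp only [Nat.add_zero] at hk
    subst hk
    rw [Finset.Icc_self, Finset.sum_singleton, Finset.sum_singleton, Nat.sub_self, pow_zero,
      one_mul]
  | succ j ih =>
    intro k hk hk1
    have hkn : k + 1 ≤ n := by omega
    have hsplit : Finset.Icc k n = insert k (Finset.Icc (k + 1) n) := by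
      rw [Finset.Icc_add_one_left_eq_Ioc, Finset.Ioc_insert_left (by omega : k ≤ n)]
    have hnotmem : k ∉ Finset.Icc (k + 1) n := by simp
    set S : ℝ := ∑ i ∈ Finset.Icc (k + 1) n, a i ^ 2 with hS
    have hS0 : 0 ≤ S := Finset.sum_nonneg fun i _ => sq_nonneg _
    have hSle : S ≤ a k ^ 2 := hord k hk1 (by omega)
    have hB := lemB μ (a k ^ 2) S hμ0 hμ1 hS0 hSle
    have hih := ih (k + 1) (by omega) (by omega)
    rw [hsplit, Finset.sum_insert hnotmem, Finset.sum_insert hnotmem, Nat.sub_self, pow_zero,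
      one_mul]
    have hstep : ∑ i ∈ Finset.Icc (k + 1) n, c ^ (i - (k + 1)) * (a i ^ 2) ^ μ =
        ∑ i ∈ Finset.Icc (k + 1) n, (a i ^ 2) ^ μ * c ^ (i - (k + 1)) := by
      exact Finset.sum_congr rfl fun i _ => mul_comm _ _
    have hmul : c * ∑ i ∈ Finset.Icc (k + 1) n, c ^ (i - (k + 1)) * (a i ^ 2) ^ μ =
        ∑ i ∈ Finset.Icc (k + 1) n, c ^ (i - k) * (a i ^ 2) ^ μ := by
      rw [Finset.mul_sum]
      refine Finset.sum_congr rfl fun i hi => ?_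
      rw [Finset.mem_Icc] at hi
      rw [← mul_assoc, show c * c ^ (i - (k + 1)) = c ^ (i - (k + 1) + 1) from (pow_succ' c _).symm,
        show i - (k + 1) + 1 = i - k by omega]
    calc (a k ^ 2 + S) ^ μ ≤ (a k ^ 2) ^ μ + (2 ^ μ - 1) * S ^ μ := hB
      _ = (a k ^ 2) ^ μ + c * S ^ μ := by rw [hc]
      _ ≤ (a k ^ 2) ^ μ + c * ∑ i ∈ Finset.Icc (k + 1) n, c ^ (i - (k + 1)) * (a i ^ 2) ^ μ := by
          have := mul_le_mul_of_nonneg_left hih hc0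
          linarith
      _ = (a k ^ 2) ^ μ + ∑ i ∈ Finset.Icc (k + 1) n, c ^ (i - k) * (a i ^ 2) ^ μ := by
          rw [hmul]

theorem fRenyi_polygamy_large_sum (α μ : ℝ) (hα1 : (Real.sqrt 7 - 1) / 2 ≤ α)
    (hα2 : α ≤ (Real.sqrt 13 - 1) / 2) (hα : α ≠ 1) (hμ0 : 0 ≤ μ) (hμ1 : μ ≤ 1)
    (n : ℕ) (hn : 2 ≤ n) (a : ℕ → ℝ)
    (ha : ∀ i ∈ Finset.Icc 1 n, 0 ≤ a i ∧ a i ≤ 1)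
    (hsum : 1 ≤ ∑ i ∈ Finset.Icc 1 n, a i ^ 2)
    (hord : ∀ i, 1 ≤ i → i ≤ n - 1 → ∑ j ∈ Finset.Icc (i + 1) n, a j ^ 2 ≤ a i ^ 2) :
    fRenyi α 1 ^ μ ≤
      ∑ i ∈ Finset.Icc 1 n, (2 ^ μ - 1) ^ (i - 1) * fRenyi α (a i) ^ μ := by
  have hsqrt7 : (2:ℝ) ≤ Real.sqrt 7 := by
    nlinarith [Real.sq_sqrt (by norm_num : (7:ℝ) ≥ 0), Real.sqrt_nonneg (7:ℝ)]
  have hsqrt13 : Real.sqrt 13 ≤ 4 := by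
    nlinarith [Real.sq_sqrt (by norm_num : (13:ℝ) ≥ 0), Real.sqrt_nonneg (13:ℝ)]
  have hα0 : 0 < α := by linarith
  have hα2' : α < 2 := by linarith
  have hc0 : 0 ≤ (2:ℝ) ^ μ - 1 := by
    have : (2:ℝ) ^ (0:ℝ) ≤ 2 ^ μ := Real.rpow_le_rpow_of_exponent_le (by norm_num) hμ0
    rw [Real.rpow_zero] at this
    linarith
  rw [fRenyi_one α hα, Real.one_rpow]
  have h1 : (1:ℝ) ≤ (∑ i ∈ Finset.Icc 1 n, a i ^ 2) ^ μ := Real.one_le_rpow hsum hμ0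
  have h2 := key_ind μ (2 ^ μ - 1) rfl hμ0 hμ1 n a hord (n - 1) 1 (by omega) le_rfl
  have h3 : ∑ i ∈ Finset.Icc 1 n, (2 ^ μ - 1) ^ (i - 1) * (a i ^ 2) ^ μ ≤
      ∑ i ∈ Finset.Icc 1 n, (2 ^ μ - 1) ^ (i - 1) * fRenyi α (a i) ^ μ := by
    refine Finset.sum_le_sum fun i hi => ?_
    obtain ⟨hai0, hai1⟩ := ha i hi
    refine mul_le_mul_of_nonneg_left ?_ (pow_nonneg hc0 _)
    exact Real.rpow_le_rpow (sq_nonneg _) (lemA α (a i) hα0 hα2' hα hai0 hai1) hμ0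
  linarith
end
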